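/- arXiv:0811.4672 — 5 statements merged into one kernel-verified Lean document; each statement's English description precedes it below -/
import Mathlib

section
/- Let x : ℕ → ℝ, ε ≥ 0, and n ≥ 1. Suppose 0 = c_0 < c_1 < … < c_L = n is a segmentation of {1, …, n} such that every block {c_{t−1}+1, …, c_t} is ε-point-coverable and is maximal, meaning that for each t either c_t = n or the extended block {c_{t−1}+1, …, c_t + 1} is not ε-point-coverable. Then for every segmentation 0 = d_0 < d_1 < … < d_l = n all of whose blocks {d_{t−1}+1, …, d_t} are ε-point-coverable, one has L ≤ l. In other words, the greedy segmentation by maximal point-coverable blocks uses the minimum possible number of segments. -/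
/-!
Greedy stays ahead. Writing `d` for any segmentation into coverable blocks, induction on `t` gives
`d t ≤ c t`: if `d t ≤ c t` but `c (t + 1) < d (t + 1)`, the coverable block
`{d t + 1, …, d (t + 1)}` contains the extended greedy block `{c t + 1, …, c (t + 1) + 1}`,
contradicting its maximality. So if `l < L`, then `n = d l ≤ c l < c L = n`.
-/

/-- The integer interval `{a, …, b}` is `ε`-point-coverable: a single line `k ↦ y + m·k`
approximates every sample `x k` with `a ≤ k ≤ b` to within `ε`. -/
def PointCoverable (x : ℕ → ℝ) (ε : ℝ) (a b : ℕ) : Prop :=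
  ∃ y m : ℝ, ∀ k : ℕ, a ≤ k → k ≤ b → |x k - (y + m * (k : ℝ))| ≤ ε

theorem PointCoverable.mono {x : ℕ → ℝ} {ε : ℝ} {a b a' b' : ℕ}
    (h : PointCoverable x ε a b) (ha : a ≤ a') (hb : b' ≤ b) :
    PointCoverable x ε a' b' := by
  obtain ⟨y, m, hy⟩ := h
  exact ⟨y, m, fun k hka hkb => hy k (ha.trans hka) (hkb.trans hb)⟩

theorem PointCoverable.le_greedy_breakpoint {x : ℕ → ℝ} {ε : ℝ} {n L l : ℕ}
    {c d : ℕ → ℕ}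
    (hcmax : ∀ t < L, c (t + 1) = n ∨ ¬ PointCoverable x ε (c t + 1) (c (t + 1) + 1))
    (hd0 : d 0 = 0) (hdn : ∀ t ≤ l, d t ≤ n)
    (hdcov : ∀ t < l, PointCoverable x ε (d t + 1) (d (t + 1))) :
    ∀ t ≤ L, t ≤ l → d t ≤ c t := by
  intro t
  induction t with
  | zero => intro _ _; omega
  | succ t ih =>
    intro htL htl
    have hdc : d t ≤ c t := ih (by omega) (by omega)
    by_contra! hcd
    have hext : PointCoverable x ε (c t + 1) (c (t + 1) + 1) :=
      (hdcov t htl).mono (by omega) hcd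
    rcases hcmax t htL with hcn | hmax
    · have := hdn (t + 1) htl
      omega
    · exact hmax hext

theorem stmt_4_general (x : ℕ → ℝ) (ε : ℝ) (n : ℕ)
    (L : ℕ) (c : ℕ → ℕ) (hcL : c L = n)
    (hcmono : ∀ t < L, c t < c (t + 1))
    (hcmax : ∀ t < L, c (t + 1) = n ∨ ¬ PointCoverable x ε (c t + 1) (c (t + 1) + 1))
    (l : ℕ) (d : ℕ → ℕ) (hd0 : d 0 = 0) (hdl : d l = n)
    (hdmono : ∀ t < l, d t < d (t + 1))
    (hdcov : ∀ t < l, PointCoverable x ε (d t + 1) (d (t + 1))) :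
    L ≤ l := by
  have hdn : ∀ t ≤ l, d t ≤ n := fun t ht =>
    hdl ▸ (strictMonoOn_Iic_of_lt_succ hdmono).monotoneOn ht Set.self_mem_Iic ht
  by_contra! hlL
  have hdc : d l ≤ c l := PointCoverable.le_greedy_breakpoint hcmax hd0 hdn hdcov l hlL.le le_rfl
  have hcc : c l < c L := strictMonoOn_Iic_of_lt_succ hcmono hlL.le Set.self_mem_Iic hlL
  omega

theorem stmt_4 (x : ℕ → ℝ) (ε : ℝ) (hε : 0 ≤ ε) (n : ℕ) (hn : 1 ≤ n)
    (L : ℕ) (c : ℕ → ℕ) (hc0 : c 0 = 0) (hcL : c L = n)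
    (hcmono : ∀ t < L, c t < c (t + 1))
    (hccov : ∀ t < L, PointCoverable x ε (c t + 1) (c (t + 1)))
    (hcmax : ∀ t < L, c (t + 1) = n ∨ ¬ PointCoverable x ε (c t + 1) (c (t + 1) + 1))
    (l : ℕ) (d : ℕ → ℕ) (hd0 : d 0 = 0) (hdl : d l = n)
    (hdmono : ∀ t < l, d t < d (t + 1))
    (hdcov : ∀ t < l, PointCoverable x ε (d t + 1) (d (t + 1))) :
    L ≤ l :=
  stmt_4_general x ε n L c hcL hcmono hcmax l d hd0 hdl hdmono hdcov
end

section
/- Let P be a property of nonempty integer intervals {a, …, b} ⊆ ℕ (a ≤ b) such that (i) every singleton interval has P, and (ii) P is closed under nonempty subintervals: if {a, …, b} has P and a ≤ a' ≤ b' ≤ b then {a', …, b'} has P. Let n ≥ 1, and suppose 0 = c_0 < c_1 < … < c_L = n is a segmentation of {1, …, n} all of whose blocks have P and are maximal (for each t, either c_t = n or {c_{t−1}+1, …, c_t + 1} does not have P). Then every segmentation 0 = d_0 < … < d_l = n all of whose blocks have P satisfies L ≤ l. -/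
/-!
Greedy stays ahead: by induction on `t`, the `t`-th cut `d t` of any segmentation into
`P`-blocks is at most the `t`-th greedy cut `c t`. Indeed, if `c (t + 1) < d (t + 1)`, then the
block `{d t + 1, …, d (t + 1)}` contains `{c t + 1, …, c (t + 1) + 1}`, which would then have `P`,
against the maximality of the greedy block. So if `l < L`, then `n = d l ≤ c l < c L = n`.
-/

theorem le_of_maximal_block {P : ℕ → ℕ → Prop}
    (hsub : ∀ a b a' b' : ℕ, P a b → a ≤ a' → a' ≤ b' → b' ≤ b → P a' b')
    {a a' b b' n : ℕ} (hP : P (a + 1) b) (ha : a ≤ a') (hb' : a' < b') (hbn : b ≤ n)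
    (hmax : b' = n ∨ ¬ P (a' + 1) (b' + 1)) : b ≤ b' := by
  by_contra! hlt
  rcases hmax with rfl | hnot
  · omega
  · exact hnot (hsub _ _ _ _ hP (by omega) (by omega) hlt)

theorem cut_le_greedy_cut {P : ℕ → ℕ → Prop}
    (hsub : ∀ a b a' b' : ℕ, P a b → a ≤ a' → a' ≤ b' → b' ≤ b → P a' b')
    {n L l : ℕ} {c d : ℕ → ℕ}
    (hcmono : ∀ t < L, c t < c (t + 1))
    (hcmax : ∀ t < L, c (t + 1) = n ∨ ¬ P (c t + 1) (c (t + 1) + 1))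
    (hd0 : d 0 = 0) (hdn : ∀ t ≤ l, d t ≤ n)
    (hdcov : ∀ t < l, P (d t + 1) (d (t + 1))) :
    ∀ t ≤ L, t ≤ l → d t ≤ c t := by
  intro t
  induction t with
  | zero => intro _ _; simp [hd0]
  | succ t ih =>
    intro htL htl
    have hdc : d t ≤ c t := ih (Nat.le_of_succ_le htL) (Nat.le_of_succ_le htl)
    exact le_of_maximal_block hsub (hdcov t htl) hdc (hcmono t htL) (hdn _ htl) (hcmax t htL)

theorem stmt_6_general (P : ℕ → ℕ → Prop)
    (hsub : ∀ a b a' b' : ℕ, P a b → a ≤ a' → a' ≤ b' → b' ≤ b → P a' b')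
    (n : ℕ)
    (L : ℕ) (c : ℕ → ℕ) (hcL : c L = n)
    (hcmono : ∀ t < L, c t < c (t + 1))
    (hcmax : ∀ t < L, c (t + 1) = n ∨ ¬ P (c t + 1) (c (t + 1) + 1))
    (l : ℕ) (d : ℕ → ℕ) (hd0 : d 0 = 0) (hdl : d l = n)
    (hdmono : ∀ t < l, d t < d (t + 1))
    (hdcov : ∀ t < l, P (d t + 1) (d (t + 1))) :
    L ≤ l := by
  by_contra! hlt
  have hdn : ∀ t ≤ l, d t ≤ n := fun t ht =>
    hdl ▸ (strictMonoOn_Iic_of_lt_succ hdmono).monotoneOn ht (Set.mem_Iic.2 le_rfl) ht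
  have hdc : d l ≤ c l :=
    cut_le_greedy_cut hsub hcmono hcmax hd0 hdn hdcov l hlt.le le_rfl
  have hcl : c l < c L := (strictMonoOn_Iic_of_lt_succ hcmono) hlt.le (Set.mem_Iic.2 le_rfl) hlt
  omega

theorem stmt_6 (P : ℕ → ℕ → Prop)
    (hsingle : ∀ a : ℕ, P a a)
    (hsub : ∀ a b a' b' : ℕ, P a b → a ≤ a' → a' ≤ b' → b' ≤ b → P a' b')
    (n : ℕ) (hn : 1 ≤ n)
    (L : ℕ) (c : ℕ → ℕ) (hc0 : c 0 = 0) (hcL : c L = n)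
    (hcmono : ∀ t < L, c t < c (t + 1))
    (hccov : ∀ t < L, P (c t + 1) (c (t + 1)))
    (hcmax : ∀ t < L, c (t + 1) = n ∨ ¬ P (c t + 1) (c (t + 1) + 1))
    (l : ℕ) (d : ℕ → ℕ) (hd0 : d 0 = 0) (hdl : d l = n)
    (hdmono : ∀ t < l, d t < d (t + 1))
    (hdcov : ∀ t < l, P (d t + 1) (d (t + 1))) :
    L ≤ l :=
  stmt_6_general P hsub n L c hcL hcmono hcmax l d hd0 hdl hdmono hdcov
end

section
/- Let P be a property of nonempty integer intervals closed under nonempty subintervals (if {a, …, b} has P and a ≤ a' ≤ b' ≤ b then {a', …, b'} has P). Suppose {1, …, n} admits a segmentation into l blocks each having P, with first block {1, …, m}, and suppose {1, …, m'} has P where m ≤ m' < n. Then the interval {m'+1, …, n} admits a segmentation into at most l − 1 blocks each having P. -/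
/-! If the first block of a segmentation `c` of `{1, …, n}` is enlarged to `{1, …, m'}`, let `c k` be
the last cut point of `c` at or before `m'`. The blocks after `c k` still segment `{c k + 1, …, n}`,
and moving the start of the first of them from `c k + 1` to `m' + 1` keeps property `P` by
subinterval closure. At least the original first block is dropped, so at most `l - 1` remain. -/

def IsSegmentation (P : ℕ → ℕ → Prop) (c : ℕ → ℕ) (l : ℕ) : Prop :=
  ∀ t < l, c t < c (t + 1) ∧ P (c t + 1) (c (t + 1))

def SubintervalClosed (P : ℕ → ℕ → Prop) : Prop :=
  ∀ a b a' b' : ℕ, P a b → a ≤ a' → a' ≤ b' → b' ≤ b → P a' b'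

theorem Nat.exists_le_lt_succ_of_le_of_lt {c : ℕ → ℕ} {x : ℕ} :
    ∀ {l : ℕ}, c 0 ≤ x → x < c l → ∃ k < l, c k ≤ x ∧ x < c (k + 1)
  | 0, h0, hl => absurd h0 (Nat.not_le.mpr hl)
  | l + 1, h0, hl => by
    by_cases hx : x < c l
    · obtain ⟨k, hk, hxk⟩ := exists_le_lt_succ_of_le_of_lt h0 hx
      exact ⟨k, by omega, hxk⟩
    · exact ⟨l, by omega, Nat.le_of_not_lt hx, hl⟩

namespace IsSegmentation

variable {P : ℕ → ℕ → Prop} {c : ℕ → ℕ} {l : ℕ}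

theorem drop (h : IsSegmentation P c l) (k : ℕ) :
    IsSegmentation P (fun t => c (k + t)) (l - k) := fun t ht => by
  simpa only [Nat.add_assoc] using h (k + t) (by omega)

theorem update_zero (hP : SubintervalClosed P) (h : IsSegmentation P c l) {a : ℕ}
    (ha₀ : c 0 ≤ a) (ha₁ : a < c 1) : IsSegmentation P (Function.update c 0 a) l := by
  rintro (_ | t) ht
  · obtain ⟨-, hblock⟩ := h 0 ht
    simp only [Function.update_self, zero_add, ne_eq, one_ne_zero, not_false_eq_true,
      Function.update_of_ne]
    exact ⟨ha₁, hP _ _ _ _ hblock (by omega) ha₁ le_rfl⟩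
  · simpa only [ne_eq, Nat.add_one_ne_zero, not_false_eq_true, Function.update_of_ne] using h _ ht

end IsSegmentation

theorem stmt_7_general (P : ℕ → ℕ → Prop)
    (hsub : ∀ a b a' b' : ℕ, P a b → a ≤ a' → a' ≤ b' → b' ≤ b → P a' b')
    (n m m' l : ℕ) (hl : 1 ≤ l)
    (c : ℕ → ℕ) (hc1 : c 1 = m) (hcl : c l = n)
    (hcmono : ∀ t < l, c t < c (t + 1))
    (hccov : ∀ t < l, P (c t + 1) (c (t + 1)))
    (hmm' : m ≤ m') (hm'n : m' < n) :
    ∃ l' ≤ l - 1, ∃ d : ℕ → ℕ, d 0 = m' ∧ d l' = n ∧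
      (∀ t < l', d t < d (t + 1)) ∧ (∀ t < l', P (d t + 1) (d (t + 1))) := by
  have hc : IsSegmentation P c l := fun t ht => ⟨hcmono t ht, hccov t ht⟩
  obtain ⟨k, hk, hck, hck₁⟩ : ∃ k < l - 1, c (1 + k) ≤ m' ∧ m' < c (1 + k + 1) :=
    Nat.exists_le_lt_succ_of_le_of_lt (c := fun t => c (1 + t)) (by simpa [hc1])
      (by rwa [Nat.add_sub_cancel' hl, hcl])
  have hd := (hc.drop (1 + k)).update_zero hsub hck hck₁
  refine ⟨l - (1 + k), by omega, _, Function.update_self .., ?_,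
    fun t ht => (hd t ht).1, fun t ht => (hd t ht).2⟩
  rw [Function.update_of_ne (by omega), Nat.add_sub_cancel' (by omega), hcl]

theorem stmt_7 (P : ℕ → ℕ → Prop)
    (hsub : ∀ a b a' b' : ℕ, P a b → a ≤ a' → a' ≤ b' → b' ≤ b → P a' b')
    (n m m' l : ℕ) (hl : 1 ≤ l)
    (c : ℕ → ℕ) (hc0 : c 0 = 0) (hc1 : c 1 = m) (hcl : c l = n)
    (hcmono : ∀ t < l, c t < c (t + 1))
    (hccov : ∀ t < l, P (c t + 1) (c (t + 1)))
    (hP : P 1 m') (hmm' : m ≤ m') (hm'n : m' < n) :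
    ∃ l' ≤ l - 1, ∃ d : ℕ → ℕ, d 0 = m' ∧ d l' = n ∧
      (∀ t < l', d t < d (t + 1)) ∧ (∀ t < l', P (d t + 1) (d (t + 1))) :=
  stmt_7_general P hsub n m m' l hl c hc1 hcl hcmono hccov hmm' hm'n
end

section
/- Let x : ℕ → ℝ, ε ≥ 0, and let i < k < j be natural number indices. The line segment from (i, x i) to (j, x j) approximates the sample at index k within ε, i.e. |x k − (x i + ((k − i)/(j − i))·(x j − x i))| ≤ ε, if and only if its slope (x j − x i)/(j − i) lies in the closed interval [(x k − ε − x i)/(k − i), (x k + ε − x i)/(k − i)]. -/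
theorem abs_sub_add_mul_le_iff_mem_Icc {K : Type*} [Field K] [LinearOrder K]
    [IsStrictOrderedRing K] {a y c s ε : K} (ha : 0 < a) :
    |y - (c + a * s)| ≤ ε ↔ s ∈ Set.Icc ((y - ε - c) / a) ((y + ε - c) / a) := by
  rw [abs_le, Set.mem_Icc, div_le_iff₀ ha, le_div_iff₀ ha]
  constructor <;> rintro ⟨h₁, h₂⟩ <;> constructor <;> linarith

theorem stmt_9_general (x : ℕ → ℝ) (ε : ℝ) (i k j : ℕ) (hik : i < k) :
    |x k - (x i + (((k : ℝ) - (i : ℝ)) / ((j : ℝ) - (i : ℝ))) * (x j - x i))| ≤ ε ↔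
      (x j - x i) / ((j : ℝ) - (i : ℝ)) ∈
        Set.Icc ((x k - ε - x i) / ((k : ℝ) - (i : ℝ)))
          ((x k + ε - x i) / ((k : ℝ) - (i : ℝ))) := by
  have hrun : (0 : ℝ) < (k : ℝ) - (i : ℝ) := sub_pos.mpr (Nat.cast_lt.mpr hik)
  rw [div_mul_eq_mul_div, mul_div_assoc]
  exact abs_sub_add_mul_le_iff_mem_Icc hrun

theorem stmt_9 (x : ℕ → ℝ) (ε : ℝ) (hε : 0 ≤ ε) (i k j : ℕ) (hik : i < k) (hkj : k < j) :
    |x k - (x i + (((k : ℝ) - (i : ℝ)) / ((j : ℝ) - (i : ℝ))) * (x j - x i))| ≤ ε ↔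
      (x j - x i) / ((j : ℝ) - (i : ℝ)) ∈
        Set.Icc ((x k - ε - x i) / ((k : ℝ) - (i : ℝ)))
          ((x k + ε - x i) / ((k : ℝ) - (i : ℝ))) :=
  stmt_9_general x ε i k j hik
end

section
/- Let A, B, K be points in the Euclidean plane ℝ² with B ≠ A and K ≠ A, and let ε ≥ 0. If the angle ∠KAB (the angle at vertex A between the rays AK and AB) is at most arctan(ε / dist(A, K)), then the distance from K to the line through A and B is at most ε. -/
/-!
The foot of the perpendicular from `K` to the line `AB` lies at distance `dist A K * sin ∠KAB`
from `K`. The hypothesis bounds the angle by `arctan (ε / dist A K) < π / 2`, and on `[0, π / 2]`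
the sine is increasing with `sin (arctan x) = x / √(1 + x ^ 2) ≤ x`, so this distance is at most `ε`.
-/

open EuclideanGeometry

open Real in
theorem Real.sin_le_of_le_arctan {θ x : ℝ} (hθ : 0 ≤ θ) (h : θ ≤ arctan x) : sin θ ≤ x := by
  have hx : 0 ≤ x := arctan_nonneg.mp (hθ.trans h)
  calc sin θ ≤ sin (arctan x) :=
        sin_le_sin_of_le_of_le_pi_div_two (by linarith [pi_pos]) (arctan_lt_pi_div_two x).le h
    _ = x / √(1 + x ^ 2) := sin_arctan x
    _ ≤ x := div_le_self hx (one_le_sqrt.mpr (by nlinarith))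

namespace InnerProductGeometry

variable {V : Type*} [NormedAddCommGroup V] [InnerProductSpace ℝ V]

theorem norm_sub_inner_div_smul_eq_norm_mul_sin_angle (v w : V) :
    ‖v - (inner ℝ v w / ‖w‖ ^ 2) • w‖ = ‖v‖ * Real.sin (angle v w) := by
  rcases eq_or_ne w 0 with rfl | hw
  · simp [angle_zero_right]
  have hsq : (‖v - (inner ℝ v w / ‖w‖ ^ 2) • w‖ * ‖w‖) ^ 2
      = (Real.sin (angle v w) * (‖v‖ * ‖w‖)) ^ 2 := by
    rw [sin_angle_mul_norm_mul_norm,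
      Real.sq_sqrt (by nlinarith [real_inner_mul_inner_self_le v w]), mul_pow, norm_sub_sq_real,
      real_inner_smul_right, norm_smul, mul_pow, norm_div, real_inner_self_eq_norm_sq,
      real_inner_self_eq_norm_sq]
    simp only [Real.norm_eq_abs, abs_pow, abs_norm, div_pow, sq_abs]
    field_simp
    ring
  have h := (pow_left_inj₀ (by positivity) (by positivity [sin_angle_nonneg v w]) two_ne_zero).mp hsq
  exact mul_right_cancel₀ (norm_ne_zero_iff.mpr hw) (by linarith)

end InnerProductGeometry

namespace EuclideanGeometry

variable {V P : Type*} [NormedAddCommGroup V] [InnerProductSpace ℝ V] [MetricSpace P]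
  [NormedAddTorsor V P]

theorem infDist_affineSpan_pair_le_dist_mul_sin_angle (A B K : P) :
    Metric.infDist K (affineSpan ℝ {A, B} : Set P) ≤ dist A K * Real.sin (∠ K A B) := by
  set t := inner ℝ (K -ᵥ A) (B -ᵥ A) / ‖B -ᵥ A‖ ^ 2
  calc Metric.infDist K (affineSpan ℝ {A, B} : Set P)
      ≤ dist K (AffineMap.lineMap A B t) :=
        Metric.infDist_le_dist_of_mem (AffineMap.lineMap_mem_affineSpan_pair t A B)
    _ = ‖(K -ᵥ A) - t • (B -ᵥ A)‖ := by
        rw [dist_eq_norm_vsub V, AffineMap.lineMap_apply, vsub_vadd_eq_vsub_sub]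
    _ = dist A K * Real.sin (∠ K A B) := by
        rw [InnerProductGeometry.norm_sub_inner_div_smul_eq_norm_mul_sin_angle, dist_comm,
          dist_eq_norm_vsub V]
        rfl

end EuclideanGeometry

theorem stmt_13_general (A B K : EuclideanSpace ℝ (Fin 2)) (hK : K ≠ A)
    (ε : ℝ)
    (hangle : EuclideanGeometry.angle K A B ≤ Real.arctan (ε / dist A K)) :
    Metric.infDist K
      ((affineSpan ℝ ({A, B} : Set (EuclideanSpace ℝ (Fin 2)))) :
        Set (EuclideanSpace ℝ (Fin 2))) ≤ ε := by
  have hAK : 0 < dist A K := dist_pos.mpr hK.symm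
  have hsin : Real.sin (∠ K A B) ≤ ε / dist A K :=
    Real.sin_le_of_le_arctan (angle_nonneg K A B) hangle
  calc Metric.infDist K _ ≤ dist A K * Real.sin (∠ K A B) :=
        infDist_affineSpan_pair_le_dist_mul_sin_angle A B K
    _ ≤ dist A K * (ε / dist A K) := mul_le_mul_of_nonneg_left hsin hAK.le
    _ = ε := mul_div_cancel₀ ε hAK.ne'

theorem stmt_13 (A B K : EuclideanSpace ℝ (Fin 2)) (hB : B ≠ A) (hK : K ≠ A)
    (ε : ℝ) (hε : 0 ≤ ε)
    (hangle : EuclideanGeometry.angle K A B ≤ Real.arctan (ε / dist A K)) :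
    Metric.infDist K
      ((affineSpan ℝ ({A, B} : Set (EuclideanSpace ℝ (Fin 2)))) :
        Set (EuclideanSpace ℝ (Fin 2))) ≤ ε :=
  stmt_13_general A B K hK ε hangle
end
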